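/- Every irreducible deductive system D of a Nelson algebra N is a prime filter and satisfies D ⊆ φ(D), where φ(D) is the complement of ∼D. -/
import Mathlib


/-- A Nelson algebra: a distributive lattice (axioms N1, N2) with a De Morgan
involution `tilde` (N3, N4), the Kleene condition (N5), and a weak implication
`imp` satisfying (N6)-(N8). -/
class NelsonAlgebra (N : Type*) extends DistribLattice N where
  one : N
  tilde : N → N
  imp : N → N → N
  tilde_tilde : ∀ x : N, tilde (tilde x) = x
  tilde_sup : ∀ x y : N, tilde (x ⊔ y) = tilde x ⊓ tilde y
  kleene : ∀ x y : N, x ⊓ tilde x = (x ⊓ tilde x) ⊓ (y ⊔ tilde y)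
  imp_self : ∀ x : N, imp x x = one
  imp_imp : ∀ x y z : N, imp x (imp y z) = imp (x ⊓ y) z
  inf_imp : ∀ x y : N, x ⊓ imp x y = x ⊓ (tilde x ⊔ y)

open NelsonAlgebra

/-- A deductive system: contains 1 and is closed under modus ponens. -/
def IsDeductiveSystem {N : Type*} [NelsonAlgebra N] (D : Set N) : Prop :=
  NelsonAlgebra.one ∈ D ∧ ∀ x y : N, x ∈ D → imp x y ∈ D → y ∈ D

/-- A lattice filter: contains 1, upward closed, closed under meets. -/
def IsLatticeFilter {N : Type*} [NelsonAlgebra N] (F : Set N) : Prop :=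
  NelsonAlgebra.one ∈ F ∧ (∀ x y : N, x ∈ F → x ≤ y → y ∈ F) ∧
    ∀ x y : N, x ∈ F → y ∈ F → x ⊓ y ∈ F

/-- A prime filter: a proper lattice filter such that x ⊔ y ∈ F implies
x ∈ F or y ∈ F. -/
def IsPrimeFilter {N : Type*} [NelsonAlgebra N] (F : Set N) : Prop :=
  IsLatticeFilter F ∧ F ≠ Set.univ ∧ ∀ x y : N, x ⊔ y ∈ F → x ∈ F ∨ y ∈ F

/-- An irreducible deductive system. -/
def IsIrreducibleDS {N : Type*} [NelsonAlgebra N] (D : Set N) : Prop :=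
  IsDeductiveSystem D ∧ D ≠ Set.univ ∧
    ∀ D₁ D₂ : Set N, IsDeductiveSystem D₁ → IsDeductiveSystem D₂ →
      D = D₁ ∩ D₂ → D = D₁ ∨ D = D₂

section Basic
variable {N : Type*} [NelsonAlgebra N]

lemma NA_le_one (x : N) : x ≤ one := by
  have h := inf_imp x x
  rw [NelsonAlgebra.imp_self, inf_eq_left.2 (le_sup_right : x ≤ tilde x ⊔ x)] at h
  exact inf_eq_left.1 h

lemma NA_imp_one (x : N) : imp x one = one := by
  calc imp x one = imp x (imp x x) := by rw [NelsonAlgebra.imp_self]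
    _ = imp (x ⊓ x) x := imp_imp x x x
    _ = one := by rw [inf_idem, NelsonAlgebra.imp_self]

lemma NA_imp_inf_right (x y : N) : imp (x ⊓ y) y = one := by
  rw [← imp_imp, NelsonAlgebra.imp_self, NA_imp_one]

lemma NA_tilde_anti {x y : N} (h : x ≤ y) : tilde y ≤ tilde x := by
  have h2 := tilde_sup x y
  rw [sup_eq_right.2 h] at h2
  rw [h2]; exact inf_le_left

lemma NA_tilde_inf (x y : N) : tilde (x ⊓ y) = tilde x ⊔ tilde y := by
  have h := tilde_sup (tilde x) (tilde y)
  rw [tilde_tilde, tilde_tilde] at h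
  rw [← h, tilde_tilde]

lemma NA_kleene_le (x y : N) : x ⊓ tilde x ≤ y ⊔ tilde y := by
  rw [kleene x y]; exact inf_le_right

/-- join of "nilpotent" elements is nilpotent -/
lemma NA_S_sup {s t : N} (hs : s ≤ tilde s) (ht : t ≤ tilde t) :
    s ⊔ t ≤ tilde (s ⊔ t) := by
  rw [tilde_sup]
  have hst : s ≤ tilde t := by
    have h1 : s ≤ t ⊔ tilde t := le_trans (le_inf le_rfl hs) (NA_kleene_le s t)
    calc s = s ⊓ (t ⊔ tilde t) := (inf_eq_left.2 h1).symm
      _ = (s ⊓ t) ⊔ (s ⊓ tilde t) := inf_sup_left s t (tilde t)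
      _ ≤ tilde t := sup_le (le_trans inf_le_right ht) inf_le_right
  have hts : t ≤ tilde s := by
    have h1 : t ≤ s ⊔ tilde s := le_trans (le_inf le_rfl ht) (NA_kleene_le t s)
    calc t = t ⊓ (s ⊔ tilde s) := (inf_eq_left.2 h1).symm
      _ = (t ⊓ s) ⊔ (t ⊓ tilde s) := inf_sup_left t s (tilde s)
      _ ≤ tilde s := sup_le (le_trans inf_le_right hs) inf_le_right
  exact sup_le (le_inf hs hst) (le_inf hts ht)

variable {D : Set N} (hd : IsDeductiveSystem D)
include hd

lemma NA_ds_up {x y : N} (hx : x ∈ D) (h : x ≤ y) : y ∈ D := by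
  have h1 : imp x y = one := by
    rw [← inf_eq_left.2 h]; exact NA_imp_inf_right x y
  exact hd.2 x y hx (h1 ▸ hd.1)

lemma NA_ds_inf {x y : N} (hx : x ∈ D) (hy : y ∈ D) : x ⊓ y ∈ D := by
  have h1 : imp x (imp y (x ⊓ y)) = one := by rw [imp_imp, NelsonAlgebra.imp_self]
  have h2 : imp y (x ⊓ y) ∈ D := hd.2 x _ hx (h1 ▸ hd.1)
  exact hd.2 y _ hy h2

lemma NA_ds_rule {x y : N} (hx : x ∈ D) (h : tilde x ⊔ y ∈ D) : y ∈ D := by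
  have h1 : x ⊓ imp x y ∈ D := by
    rw [inf_imp]; exact NA_ds_inf hd hx h
  exact hd.2 x y hx (NA_ds_up hd h1 inf_le_right)

lemma NA_dagger {u g z : N} (hu : u ≤ tilde u) (hg : g ∈ D) (h : g ≤ u ⊔ z) :
    z ∈ D := by
  set p := g ⊓ u with hp
  have hp_u : p ≤ u := inf_le_right
  have h1 : p ⊔ z ∈ D := by
    apply NA_ds_up hd hg
    calc g = g ⊓ (u ⊔ z) := (inf_eq_left.2 h).symm
      _ = (g ⊓ u) ⊔ (g ⊓ z) := inf_sup_left g u z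
      _ ≤ p ⊔ z := sup_le_sup le_rfl inf_le_right
  have h2 : tilde u ⊔ z ∈ D := by
    apply NA_ds_rule hd hg
    apply NA_ds_up hd h1
    apply sup_le
    · exact le_trans (le_trans hp_u hu) (le_trans le_sup_left le_sup_right)
    · exact le_trans le_sup_right le_sup_right
  have hpp : p ≤ tilde p := le_trans (le_trans hp_u hu) (NA_tilde_anti hp_u)
  have hpz : p ≤ z ⊔ (u ⊓ tilde z) := by
    have hzz : p ≤ z ⊔ tilde z := le_trans (le_inf le_rfl hpp) (NA_kleene_le p z)
    calc p = p ⊓ (z ⊔ tilde z) := (inf_eq_left.2 hzz).symm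
      _ = (p ⊓ z) ⊔ (p ⊓ tilde z) := inf_sup_left p z (tilde z)
      _ ≤ z ⊔ (u ⊓ tilde z) := sup_le_sup inf_le_right (inf_le_inf_right _ hp_u)
  have h3 : z ⊔ (u ⊓ tilde z) ∈ D := NA_ds_up hd h1 (sup_le hpz le_sup_left)
  apply NA_ds_rule hd h2
  have he : tilde (tilde u ⊔ z) = u ⊓ tilde z := by rw [tilde_sup, tilde_tilde]
  rw [he, sup_comm]
  exact h3

end Basic

section Aux
variable {N : Type*} [NelsonAlgebra N]

def auxDS (D : Set N) (a : N) : Set N :=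
  {z | ∃ d ∈ D, ∃ s : N, s ≤ tilde s ∧ a ⊓ d ≤ s ⊔ z}

variable {D : Set N} (hd : IsDeductiveSystem D) {a : N}
include hd

lemma NA_subset_auxDS : D ⊆ auxDS D a := by
  intro z hz
  exact ⟨z, hz, tilde one, by rw [tilde_tilde]; exact NA_le_one _,
    le_trans inf_le_right le_sup_right⟩

lemma NA_mem_auxDS_self : a ∈ auxDS D a :=
  ⟨one, hd.1, tilde one, by rw [tilde_tilde]; exact NA_le_one _,
    le_trans inf_le_left le_sup_right⟩

lemma NA_auxDS_ds : IsDeductiveSystem (auxDS D a) := by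
  constructor
  · exact NA_subset_auxDS hd hd.1
  · rintro x y ⟨d, hdD, s, hs, hsx⟩ ⟨e, heD, t, ht, hty⟩
    refine ⟨d ⊓ e, NA_ds_inf hd hdD heD, (s ⊔ t) ⊔ (x ⊓ tilde x), ?_, ?_⟩
    · refine NA_S_sup (NA_S_sup hs ht) ?_
      rw [NA_tilde_inf]
      exact le_trans inf_le_right le_sup_left
    · have h1 : a ⊓ (d ⊓ e) ≤ (s ⊔ x) ⊓ (t ⊔ imp x y) :=
        le_inf (le_trans (inf_le_inf_left a inf_le_left) hsx)
          (le_trans (inf_le_inf_left a inf_le_right) hty)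
      refine le_trans h1 ?_
      have hxw : x ⊓ imp x y ≤ (x ⊓ tilde x) ⊔ y := by
        rw [inf_imp, inf_sup_left]
        exact sup_le_sup le_rfl inf_le_right
      calc (s ⊔ x) ⊓ (t ⊔ imp x y)
          = (s ⊓ (t ⊔ imp x y)) ⊔ (x ⊓ (t ⊔ imp x y)) :=
            inf_sup_right s x (t ⊔ imp x y)
        _ ≤ s ⊔ ((x ⊓ t) ⊔ (x ⊓ imp x y)) := by
            refine sup_le (le_trans inf_le_left le_sup_left) ?_
            rw [inf_sup_left x t (imp x y)]
            exact le_sup_right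
        _ ≤ s ⊔ (t ⊔ ((x ⊓ tilde x) ⊔ y)) := by
            refine sup_le_sup le_rfl (sup_le_sup inf_le_right hxw)
        _ = ((s ⊔ t) ⊔ (x ⊓ tilde x)) ⊔ y := by
            rw [sup_assoc, sup_assoc]
end Aux


theorem irreducible_is_prime_below_phi {N : Type*} [NelsonAlgebra N]
    (D : Set N) (hD : IsIrreducibleDS D) :
    IsPrimeFilter D ∧ D ⊆ (tilde '' D)ᶜ := by
  obtain ⟨hds, hproper, hirr⟩ := hD
  refine ⟨⟨⟨hds.1, fun x y hx h => NA_ds_up hds hx h,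
      fun x y hx hy => NA_ds_inf hds hx hy⟩, hproper, ?_⟩, ?_⟩
  · -- primeness
    intro a b hab
    by_contra hcon
    push_neg at hcon
    obtain ⟨ha, hb⟩ := hcon
    have heq : D = auxDS D a ∩ auxDS D b := by
      apply Set.Subset.antisymm
      · exact Set.subset_inter (NA_subset_auxDS hds) (NA_subset_auxDS hds)
      · rintro z ⟨⟨d, hdD, s, hs, hsz⟩, ⟨e, heD, t, ht, htz⟩⟩
        have hg : (a ⊔ b) ⊓ (d ⊓ e) ∈ D :=
          NA_ds_inf hds hab (NA_ds_inf hds hdD heD)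
        refine NA_dagger hds (NA_S_sup hs ht) hg ?_
        calc (a ⊔ b) ⊓ (d ⊓ e) = (a ⊓ (d ⊓ e)) ⊔ (b ⊓ (d ⊓ e)) :=
              inf_sup_right a b (d ⊓ e)
          _ ≤ (s ⊔ z) ⊔ (t ⊔ z) :=
              sup_le_sup (le_trans (inf_le_inf_left a inf_le_left) hsz)
                (le_trans (inf_le_inf_left b inf_le_right) htz)
          _ = (s ⊔ t) ⊔ z := by rw [sup_sup_sup_comm, sup_idem]
    rcases hirr _ _ (NA_auxDS_ds hds) (NA_auxDS_ds hds) heq with h | h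
    · exact ha (by rw [h]; exact NA_mem_auxDS_self hds)
    · exact hb (by rw [h]; exact NA_mem_auxDS_self hds)
  · -- below phi
    intro x hx himg
    obtain ⟨y, hyD, hyx⟩ := himg
    have htx : tilde x ∈ D := by rw [← hyx, tilde_tilde]; exact hyD
    have hc : x ⊓ tilde x ∈ D := NA_ds_inf hds hx htx
    apply hproper
    apply Set.eq_univ_of_forall
    intro w
    apply NA_ds_rule hds hc
    rw [NA_tilde_inf, tilde_tilde]
    exact NA_ds_up hds hx (le_trans (le_trans le_sup_right le_sup_left) le_rfl)
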